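/- arXiv:0708.3966 — 4 statements merged into one kernel-verified Lean document; each statement's English description precedes it below -/
import Mathlib

section
/- Let K be a field, M an accessible algebraic extension of K (i.e., M is the union of a tower K = K_0 ⊆ K_1 ⊆ K_2 ⊆ ⋯ with each K_{i+1}/K_i Galois), and L a finite Galois extension of K inside a fixed separable closure. Then Gal(L/(L ∩ M)) is a subnormal subgroup of Gal(L/K). -/
/-- A subgroup `H` of `G` is subnormal if there is a finite chain
`H = H₀ ⊴ H₁ ⊴ ⋯ ⊴ Hₖ = G` with each term normal in the next. -/
def Subgroup.IsSubnormal' {G : Type*} [Group G] (H : Subgroup G) : Prop :=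
  ∃ (n : ℕ) (c : Fin (n + 1) → Subgroup G), c 0 = H ∧ c (Fin.last n) = ⊤ ∧
    ∀ i : Fin n, c i.castSucc ≤ c i.succ ∧ ((c i.castSucc).subgroupOf (c i.succ)).Normal

/-!
Put `Eᵢ = L ∩ Kᵢ`. These form an increasing chain of subfields of the finite extension `L/K`, so
it stabilises, necessarily at `L ∩ M`, and `Gal(L/Eₙ) ≤ ⋯ ≤ Gal(L/E₀) = Gal(L/K)`. Each step is
normal: every `σ ∈ Gal(L/Eᵢ)` is the restriction of some `τ ∈ Gal(Ω/Kᵢ)` (Galois correspondence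
in `Ω/K` and `L/K`), and `τ` preserves the normal extension `Kᵢ₊₁` of `Kᵢ`, so `σ` preserves
`Eᵢ₊₁`.
-/

open IntermediateField

theorem Subgroup.isSubnormal'_of_chain {G : Type*} [Group G] (H : ℕ → Subgroup G)
    (h0 : H 0 = ⊤) (hle : ∀ i, H (i + 1) ≤ H i)
    (hnormal : ∀ i, ((H (i + 1)).subgroupOf (H i)).Normal) (n : ℕ) : (H n).IsSubnormal' := by
  refine ⟨n, fun j ↦ H (n - j), by simp, by simpa using h0, fun i ↦ ?_⟩
  have hi : n - i.castSucc = n - i.succ + 1 := by simp only [Fin.val_castSucc, Fin.val_succ]; omega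
  dsimp only
  rw [hi]
  exact ⟨hle _, hnormal _⟩

namespace IntermediateField

section

variable {K L Ω : Type*} [Field K] [Field L] [Field Ω] [Algebra K L] [Algebra K Ω]

theorem comap_bot (f : L →ₐ[K] Ω) : (⊥ : IntermediateField K Ω).comap f = ⊥ :=
  le_antisymm (fun x hx ↦ by
    obtain ⟨k, hk⟩ := mem_bot.mp hx
    exact mem_bot.mpr ⟨k, f.toRingHom.injective (by simpa using hk)⟩) bot_le

theorem exists_comap_iSup_eq [FiniteDimensional K L] (f : L →ₐ[K] Ω)
    {F : ℕ → IntermediateField K Ω} (hF : Monotone F) :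
    ∃ n, (⨆ i, F i).comap f = (F n).comap f := by
  have : WellFoundedGT (IntermediateField K L) :=
    (show StrictMono fun E : IntermediateField K L ↦ E.toSubalgebra.toSubmodule from
      fun _ _ h ↦ h).wellFoundedGT
  obtain ⟨n, hn⟩ : ∃ n, ∀ m, n ≤ m → (F n).comap f = (F m).comap f :=
    WellFoundedGT.monotone_chain_condition ⟨fun i ↦ (F i).comap f, fun _ _ h _ hx ↦ hF h hx⟩
  refine ⟨n, le_antisymm (fun x hx ↦ ?_) (fun _ hx ↦ le_iSup F n hx)⟩
  have hx : f x ∈ ⋃ i, (F i : Set Ω) := by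
    rwa [← coe_iSup_of_directed hF.directed_le]
  obtain ⟨i, hi⟩ := Set.mem_iUnion.mp hx
  have hx' : x ∈ (F (max n i)).comap f := hF (le_max_right n i) hi
  rwa [← hn _ (le_max_left n i)] at hx'

end

section Galois

variable {K Ω : Type*} [Field K] [Field Ω] [Algebra K Ω] [IsGalois K Ω]

theorem map_restrictNormalHom_fixingSubgroup (F L : IntermediateField K Ω)
    [IsGalois K L] [FiniteDimensional K L] :
    F.fixingSubgroup.map (AlgEquiv.restrictNormalHom L) = fixingSubgroup (F.comap L.val) := by
  have h := InfiniteGalois.restrict_fixedField F.fixingSubgroup L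
  rw [InfiniteGalois.fixedField_fixingSubgroup] at h
  have hfix : fixedField (F.fixingSubgroup.map (AlgEquiv.restrictNormalHom L)) = F.comap L.val := by
    ext x
    rw [← mem_lift, ← h]
    simp only [mem_inf, SetLike.coe_mem, and_true]
    rfl
  rw [← hfix, fixingSubgroup_fixedField]

theorem apply_mem_of_mem_fixingSubgroup_comap {F F' : IntermediateField K Ω}
    (hFF' : F ≤ F') [Normal F (extendScalars hFF')] (L : IntermediateField K Ω) [IsGalois K L]
    [FiniteDimensional K L] {σ : Gal(L/K)} (hσ : σ ∈ fixingSubgroup (F.comap L.val)) {x : L}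
    (hx : (x : Ω) ∈ F') : (σ x : Ω) ∈ F' := by
  rw [← map_restrictNormalHom_fixingSubgroup] at hσ
  obtain ⟨τ, hτ, rfl⟩ := hσ
  rw [AlgEquiv.restrictNormalHom_apply]
  exact normal_iff_forall_map_le'.mp ‹_› (fixingSubgroupEquiv F ⟨τ, hτ⟩) ⟨x, hx, rfl⟩

theorem normal_fixingSubgroup_comap_subgroupOf {F F' : IntermediateField K Ω}
    (hFF' : F ≤ F') [Normal F (extendScalars hFF')] (L : IntermediateField K Ω) [IsGalois K L]
    [FiniteDimensional K L] :
    ((fixingSubgroup (F'.comap L.val)).subgroupOf (fixingSubgroup (F.comap L.val))).Normal := by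
  have hle : F.comap L.val ≤ F'.comap L.val := fun _ hx ↦ hFF' hx
  refine (Subgroup.normal_subgroupOf_iff (fixingSubgroup_antitone hle)).mpr fun t σ ht hσ ↦ ?_
  rw [mem_fixingSubgroup_iff] at ht ⊢
  intro x hx
  have hσx := ht _ (apply_mem_of_mem_fixingSubgroup_comap hFF' L (inv_mem hσ) hx)
  rw [AlgEquiv.mul_apply, AlgEquiv.mul_apply, hσx]
  exact σ.apply_symm_apply x

end Galois

end IntermediateField

open IntermediateField in
/-- If `M` is an accessible extension of `K` (union of a tower
`K = K₀ ⊆ K₁ ⊆ ⋯` with each step Galois), all inside a fixed separable closure `Ω` of `K`,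
and `L/K` is a finite Galois subextension, then `Gal(L/(L ∩ M))` is a subnormal
subgroup of `Gal(L/K)`. -/
theorem fixingSubgroup_isSubnormal_of_accessible (K Ω : Type*) [Field K] [Field Ω]
    [Algebra K Ω] [IsSepClosure K Ω]
    (Ki : ℕ → IntermediateField K Ω) (hmono : Monotone Ki) (h0 : Ki 0 = ⊥)
    (hgal : ∀ i, IsGalois (Ki i) (extendScalars (hmono (Nat.le_succ i))))
    (M : IntermediateField K Ω) (hM : M = ⨆ i, Ki i)
    (L : IntermediateField K Ω) [IsGalois K L] [FiniteDimensional K L] :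
    (IntermediateField.fixingSubgroup (M.comap L.val)).IsSubnormal' := by
  obtain ⟨n, hn⟩ := exists_comap_iSup_eq L.val hmono
  rw [hM, hn]
  refine Subgroup.isSubnormal'_of_chain (fun i ↦ fixingSubgroup ((Ki i).comap L.val)) ?_
    (fun i ↦ fixingSubgroup_antitone fun _ hx ↦ hmono i.le_succ hx)
    (fun i ↦ normal_fixingSubgroup_comap_subgroupOf (hmono i.le_succ) L) n
  rw [h0, comap_bot, fixingSubgroup_bot]
end

section
/- Let E ⊆ F ⊆ F' be fields with F/E and F'/E Galois, and let K_1 ⊆ K_2 be intermediate fields of F/E with K_2/K_1 Galois. Then (K_2 ∩ F')/(K_1 ∩ F') — viewed inside F' — satisfies: Gal(F'/(K_2 ∩ F')) is normal in Gal(F'/(K_1 ∩ F')). -/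
/-!
Since `K₂ ⊆ F ⊆ F'`, intersecting with `F'` changes nothing. An automorphism of `F'` fixing `K₁`
restricts to a `K₁`-embedding of `K₂` into `Ω`; since `K₂ / K₁` is normal its image is `K₂` again,
so conjugating by it preserves the fixer of `K₂`.
-/

namespace IntermediateField

variable {E Ω : Type*} [Field E] [Field Ω] [Algebra E Ω] {K₁ K₂ L : IntermediateField E Ω}

theorem coe_apply_mem_of_mem_fixingSubgroup_comap (h1 : K₁ ≤ K₂) (h2 : K₂ ≤ L)
    (hnormal : Normal K₁ (extendScalars h1)) {σ : L ≃ₐ[E] L}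
    (hσ : σ ∈ (K₁.comap L.val).fixingSubgroup) {x : L} (hx : (x : Ω) ∈ K₂) :
    (σ x : Ω) ∈ K₂ := by
  let f : extendScalars h1 →ₐ[K₁] Ω :=
    { toRingHom := (L.val : L →+* Ω).comp <| (σ : L →+* L).comp (inclusion h2).toRingHom
      commutes' := fun c ↦
        congrArg Subtype.val ((mem_fixingSubgroup_iff _ σ).1 hσ ⟨c, h1.trans h2 c.2⟩ c.2) }
  exact (AlgHom.fieldRange_of_normal f).le ⟨⟨x, hx⟩, rfl⟩

theorem fixingSubgroup_comap_subgroupOf_normal (h1 : K₁ ≤ K₂) (h2 : K₂ ≤ L)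
    (hnormal : Normal K₁ (extendScalars h1)) :
    ((K₂.comap L.val).fixingSubgroup.subgroupOf (K₁.comap L.val).fixingSubgroup).Normal where
  conj_mem τ hτ g := by
    rw [Subgroup.mem_subgroupOf, mem_fixingSubgroup_iff] at hτ ⊢
    intro x hx
    have hgx : ((g⁻¹ : L ≃ₐ[E] L) x : Ω) ∈ K₂ :=
      coe_apply_mem_of_mem_fixingSubgroup_comap h1 h2 hnormal (g⁻¹).2 hx
    change (g : L ≃ₐ[E] L) ((τ : L ≃ₐ[E] L) ((g⁻¹ : L ≃ₐ[E] L) x)) = x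
    rw [hτ _ hgx]
    exact (g : L ≃ₐ[E] L).apply_symm_apply x

end IntermediateField

open IntermediateField in
theorem fixingSubgroup_normal_step_general (E Ω : Type*) [Field E] [Field Ω] [Algebra E Ω]
    (F F' K₁ K₂ : IntermediateField E Ω)
    (hFF' : F ≤ F')
    (h1 : K₁ ≤ K₂) (h2 : K₂ ≤ F)
    (hgal : IsGalois K₁ (extendScalars h1)) :
    IntermediateField.fixingSubgroup ((K₂ ⊓ F').comap F'.val) ≤
      IntermediateField.fixingSubgroup ((K₁ ⊓ F').comap F'.val) ∧
    ((IntermediateField.fixingSubgroup ((K₂ ⊓ F').comap F'.val)).subgroupOf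
      (IntermediateField.fixingSubgroup ((K₁ ⊓ F').comap F'.val))).Normal := by
  have hK₂F' : K₂ ≤ F' := h2.trans hFF'
  rw [inf_of_le_left hK₂F', inf_of_le_left (h1.trans hK₂F')]
  exact ⟨fixingSubgroup_le ((gc_map_comap F'.val).monotone_u h1),
    fixingSubgroup_comap_subgroupOf_normal h1 hK₂F' hgal.to_normal⟩

open IntermediateField in
/-- Let `E ⊆ F ⊆ F'` be fields (inside a common overfield `Ω`) with `F/E` and `F'/E`
Galois, and let `K₁ ⊆ K₂` be intermediate fields of `F/E` with `K₂/K₁` Galois. Then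
`Gal(F'/(K₂ ∩ F'))` is a normal subgroup of `Gal(F'/(K₁ ∩ F'))`. -/
theorem fixingSubgroup_normal_step (E Ω : Type*) [Field E] [Field Ω] [Algebra E Ω]
    (F F' K₁ K₂ : IntermediateField E Ω)
    [IsGalois E F] [IsGalois E F'] (hFF' : F ≤ F')
    (h1 : K₁ ≤ K₂) (h2 : K₂ ≤ F)
    (hgal : IsGalois K₁ (extendScalars h1)) :
    IntermediateField.fixingSubgroup ((K₂ ⊓ F').comap F'.val) ≤
      IntermediateField.fixingSubgroup ((K₁ ⊓ F').comap F'.val) ∧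
    ((IntermediateField.fixingSubgroup ((K₂ ⊓ F').comap F'.val)).subgroupOf
      (IntermediateField.fixingSubgroup ((K₁ ⊓ F').comap F'.val))).Normal :=
  fixingSubgroup_normal_step_general E Ω F F' K₁ K₂ hFF' h1 h2 hgal
end

section
/- Let R ⊆ S be integral domains with quotient fields E ⊆ F such that S = R[z], the minimal polynomial of z over E has coefficients in R, and its discriminant is a unit in R (a ring cover). Then every ring epimorphism φ₀ : R → Ē onto a field Ē extends to a ring epimorphism φ : S → F̄ onto a field F̄ generated over Ē by a root of the image of irr(z, E) under φ₀. -/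
/-! Every polynomial over `R` vanishing at `z` is divisible by `p`: its image over `E` is divisible
by the minimal polynomial, and divisibility by a monic polynomial descends from `E[X]` to `R[X]`.
Hence a homomorphism out of `R[X]` killing `p` factors through `S = R[z]`. Taking for `F̄` the
field `Ē[X]/(q)`, for an irreducible factor `q` of `φ₀(p)`, and sending `X` to the root of `q`
gives the required epimorphism. -/

open Polynomial

theorem Polynomial.natDegree_pos_of_map_eq_minpoly {R E F : Type*} [CommRing R] [Field E] [Ring F]
    [Nontrivial F] [Algebra R E] [Algebra E F] {p : R[X]} {w : F} (hp : p.Monic)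
    (hirr : p.map (algebraMap R E) = minpoly E w) : 0 < p.natDegree := by
  refine Nat.pos_of_ne_zero fun h ↦ minpoly.ne_one E w ?_
  rw [← hirr, hp.natDegree_eq_zero.1 h, Polynomial.map_one]

theorem Polynomial.dvd_of_aeval_eq_zero_of_map_eq_minpoly {R E F : Type*} [CommRing R] [Field E]
    [CommRing F] [Algebra R E] [Algebra R F] [Algebra E F] [IsScalarTower R E F] {p g : R[X]}
    {w : F} (hinj : Function.Injective (algebraMap R E)) (hp : p.Monic)
    (hirr : p.map (algebraMap R E) = minpoly E w) (hg : aeval w g = 0) : p ∣ g := by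
  rw [← map_dvd_map _ hinj hp, hirr]
  exact minpoly.dvd E w (by rwa [aeval_map_algebraMap])

theorem Algebra.exists_ringHom_comp_aeval_eq_eval₂ {R S T : Type*} [CommRing R] [CommRing S]
    [CommRing T] [Algebra R S] {z : S} (hz : adjoin R {z} = ⊤) (φ₀ : R →+* T) (t : T)
    (h : ∀ g : R[X], aeval z g = 0 → eval₂ φ₀ t g = 0) :
    ∃ φ : S →+* T, ∀ g : R[X], φ (aeval z g) = eval₂ φ₀ t g := by
  have hsurj : Function.Surjective (aeval (R := R) z) := fun s ↦ by
    simpa [adjoin_singleton_eq_range_aeval] using hz.ge (Set.mem_univ s)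
  let f : R[X] →+* S := (aeval z).toRingHom
  have hker : RingHom.ker f ≤ RingHom.ker (eval₂RingHom φ₀ t) := fun g hg ↦ h g hg
  exact ⟨f.liftOfSurjective hsurj ⟨_, hker⟩, RingHom.liftOfSurjective_comp_apply f hsurj _⟩

namespace AdjoinRoot

theorem eval₂_comp_of_root {R K : Type*} [CommRing R] [CommRing K] {q : K[X]} (φ₀ : R →+* K)
    (g : R[X]) : eval₂ ((of q).comp φ₀) (root q) g = mk q (g.map φ₀) := by
  rw [← eval₂_map, ← algebraMap_eq, ← aeval_def, aeval_eq]

theorem subringClosure_range_of_union_root {R : Type*} [CommRing R] (f : R[X]) :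
    Subring.closure (Set.range (of f) ∪ {root f}) = ⊤ := by
  rw [← algebraMap_eq, ← Algebra.adjoin_eq_ring_closure, adjoinRoot_eq_top, Algebra.top_toSubring]

theorem subfieldClosure_range_of_union_root {K : Type*} [Field K] (f : K[X])
    [Fact (Irreducible f)] :
    Subfield.closure (Set.range (of f) ∪ {root f}) = ⊤ := by
  refine eq_top_iff.2 fun x _ ↦ ?_
  have hx : x ∈ Subring.closure (Set.range (of f) ∪ {root f}) := by
    rw [subringClosure_range_of_union_root]; trivial
  exact Subring.closure_le.2 Subfield.subset_closure hx

end AdjoinRoot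

theorem ringCover_extend_epimorphism_general (R S E F : Type) [CommRing R]
    [CommRing S] [Field E] [Field F]
    [Algebra R S] [Algebra R E] [Algebra R F] [Algebra S F] [Algebra E F]
    [IsScalarTower R E F] [IsScalarTower R S F]
    [IsFractionRing R E]
    (z : S) (hz : Algebra.adjoin R {z} = ⊤)
    (p : Polynomial R) (hp : p.Monic)
    (hirr : p.map (algebraMap R E) = minpoly E (algebraMap S F z))
    (Ebar : Type) [Field Ebar] (φ₀ : R →+* Ebar) (hφ₀ : Function.Surjective φ₀) :
    ∃ (Fbar : Type) (_ : Field Fbar) (φ : S →+* Fbar) (ι : Ebar →+* Fbar),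
      Function.Surjective φ ∧
      φ.comp (algebraMap R S) = ι.comp φ₀ ∧
      Polynomial.eval₂ ι (φ z) (p.map φ₀) = 0 ∧
      Subfield.closure (Set.range ι ∪ {φ z}) = ⊤ := by
  obtain ⟨q, hq, hqp⟩ := exists_irreducible_of_natDegree_pos <|
    (hp.natDegree_map φ₀).symm ▸ natDegree_pos_of_map_eq_minpoly hp hirr
  have : Fact (Irreducible q) := ⟨hq⟩
  have hker (g : R[X]) (hg : aeval z g = 0) :
      eval₂ ((AdjoinRoot.of q).comp φ₀) (AdjoinRoot.root q) g = 0 := by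
    obtain ⟨c, rfl⟩ := dvd_of_aeval_eq_zero_of_map_eq_minpoly (IsFractionRing.injective R E) hp
      hirr (by rw [aeval_algebraMap_apply, hg, map_zero])
    rw [AdjoinRoot.eval₂_comp_of_root, Polynomial.map_mul, map_mul, AdjoinRoot.mk_eq_zero.2 hqp,
      zero_mul]
  obtain ⟨φ, hφ⟩ := Algebra.exists_ringHom_comp_aeval_eq_eval₂ hz _ _ hker
  have hφz : φ z = AdjoinRoot.root q := by simpa using hφ X
  refine ⟨AdjoinRoot q, inferInstance, φ, AdjoinRoot.of q, ?_, ?_, ?_, ?_⟩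
  · intro x
    obtain ⟨h, rfl⟩ := AdjoinRoot.mk_surjective x
    obtain ⟨g, rfl⟩ := map_surjective φ₀ hφ₀ h
    exact ⟨aeval z g, by rw [hφ, AdjoinRoot.eval₂_comp_of_root]⟩
  · ext r
    simpa using hφ (C r)
  · rw [hφz, ← AdjoinRoot.algebraMap_eq, ← aeval_def, AdjoinRoot.aeval_eq, AdjoinRoot.mk_eq_zero]
    exact hqp
  · rw [hφz]
    exact AdjoinRoot.subfieldClosure_range_of_union_root q

/-- Let `R ⊆ S` be integral domains with quotient fields `E ⊆ F`, `S = R[z]`, the minimal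
polynomial of `z` over `E` having coefficients in `R` (say equal to the image of a monic
`p ∈ R[X]`) with unit discriminant (expressed by the image of `p` being separable over every
field, which for a monic polynomial is equivalent to `discr p ∈ Rˣ`): a ring cover.
Then every epimorphism `φ₀ : R → Ē` onto a field extends to an epimorphism `φ : S → F̄`
onto a field `F̄` generated over `Ē` by a root of the image of `irr(z,E)` under `φ₀`. -/
theorem ringCover_extend_epimorphism (R S E F : Type) [CommRing R] [IsDomain R]
    [CommRing S] [IsDomain S] [Field E] [Field F]
    [Algebra R S] [Algebra R E] [Algebra R F] [Algebra S F] [Algebra E F]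
    [IsScalarTower R E F] [IsScalarTower R S F]
    [IsFractionRing R E] [IsFractionRing S F]
    (z : S) (hz : Algebra.adjoin R {z} = ⊤)
    (p : Polynomial R) (hp : p.Monic)
    (hirr : p.map (algebraMap R E) = minpoly E (algebraMap S F z))
    -- unit discriminant: the image of `p` under any homomorphism to a field is separable
    (hdisc : ∀ (k : Type) [Field k] (ψ : R →+* k), (p.map ψ).Separable)
    (Ebar : Type) [Field Ebar] (φ₀ : R →+* Ebar) (hφ₀ : Function.Surjective φ₀) :
    ∃ (Fbar : Type) (_ : Field Fbar) (φ : S →+* Fbar) (ι : Ebar →+* Fbar),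
      Function.Surjective φ ∧
      φ.comp (algebraMap R S) = ι.comp φ₀ ∧
      Polynomial.eval₂ ι (φ z) (p.map φ₀) = 0 ∧
      Subfield.closure (Set.range ι ∪ {φ z}) = ⊤ :=
  ringCover_extend_epimorphism_general R S E F z hz p hp hirr Ebar φ₀ hφ₀
end

section
/- Let K(t) be a rational function field over a field K and F₀/K(t) a finite Galois extension with F₀ regular over K (i.e., K algebraically closed in F₀ and F₀/K separable). Let x ∈ F₀ be integral over K[t] with F₀ = K(t,x), and g ∈ K[T,X] monic in X with g(t,X) = irr(x, K(t)). If b ∈ K satisfies discr(g(b,X)) ≠ 0 and g(b,X) is irreducible over K, then K adjoined a root of g(b,X) is a Galois extension of K of degree [F₀ : K(t)] with Galois group isomorphic to Gal(F₀/K(t)). -/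
/-!
Let `B` be the integral closure of `K[t]` in `F₀`. It is a free `K[t]`-module of rank
`n = [F₀ : K(t)]`, the group `G = Gal(F₀/K(t))` acts on it, and it contains `x`, so that
`g(t, X) = ∏_{σ ∈ G} (X - σ x)` in `B[X]`. Specializing at `t = b`, i.e. passing to
`V = K ⊗_{K[t]} B`, gives an `n`-dimensional `K`-algebra with a `G`-action in which
`g(b, X) = ∏_σ (X - σ z)`, `z` the image of `x`. As `g(b, X)` is irreducible of degree `n`,
`K[X]/(g(b, X)) → V` is an isomorphism, so `V` is a field; as `g(b, X)` is separable, the `σ z`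
are distinct, so `G` acts faithfully on `V`, and `|G| = n = [V : K]` makes `V/K` Galois with
group `G`.
-/

open Polynomial IntermediateField
open scoped TensorProduct

theorem IsGalois.map_minpoly_eq_prod_of_adjoin_eq_top {F L : Type*} [Field F] [Field L]
    [Algebra F L] [FiniteDimensional F L] [IsGalois F L] {x : L} (hx : F⟮x⟯ = ⊤) :
    (minpoly F x).map (algebraMap F L) = ∏ σ : Gal(L/F), (X - C (σ x)) := by
  have hint : IsIntegral F x := .of_finite F x
  have hadj : Algebra.adjoin F {x} = ⊤ := by
    rw [← adjoin_simple_toSubalgebra_of_isAlgebraic hint.isAlgebraic, hx, top_toSubalgebra]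
  have hinj : Function.Injective fun σ : Gal(L/F) ↦ σ x := fun σ τ h ↦
    AlgEquiv.coe_toAlgHom_injective (AlgHom.ext_of_adjoin_eq_top hadj (Set.eqOn_singleton.mpr h))
  have hdeg : (minpoly F x).natDegree = Fintype.card Gal(L/F) := by
    rw [← adjoin.finrank hint, hx, finrank_top', ← IsGalois.card_aut_eq_finrank,
      Nat.card_eq_fintype_card]
  refine eq_of_monic_of_dvd_of_natDegree_le
    (monic_prod_of_monic _ _ fun (σ : Gal(L/F)) _ ↦ monic_X_sub_C (σ x))
    ((minpoly.monic hint).map _) ?_ ?_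
  · refine Finset.prod_dvd_of_coprime ((pairwise_coprime_X_sub_C hinj).set_pairwise _)
      fun σ _ ↦ dvd_iff_isRoot.mpr ?_
    rw [IsRoot, eval_map_algebraMap, aeval_algHom_apply, minpoly.aeval, map_zero]
  · rw [natDegree_map, hdeg, natDegree_prod_of_monic _ _ fun σ _ ↦ monic_X_sub_C _]
    simp

theorem map_eq_prod_X_sub_C_galRestrict {A K L B : Type*} [CommRing A] [CommRing B]
    [Algebra A B] [Field K] [Field L] [Algebra A K] [IsFractionRing A K] [Algebra K L]
    [Algebra A L] [IsScalarTower A K L] [Algebra B L] [IsScalarTower A B L]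
    [IsIntegralClosure B A L] [FiniteDimensional K L] [IsGalois K L] {p : A[X]} {x : B}
    (hx : K⟮algebraMap B L x⟯ = ⊤)
    (hp : p.map (algebraMap A K) = minpoly K (algebraMap B L x)) :
    p.map (algebraMap A B) = ∏ σ : Gal(L/K), (X - C (galRestrict A K L B σ x)) := by
  apply map_injective _ (IsIntegralClosure.algebraMap_injective B A L)
  rw [Polynomial.map_map, ← IsScalarTower.algebraMap_eq, IsScalarTower.algebraMap_eq A K L,
    ← Polynomial.map_map, hp, IsGalois.map_minpoly_eq_prod_of_adjoin_eq_top hx,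
    Polynomial.map_prod]
  simp [algebraMap_galRestrict_apply]

theorem finrank_baseChange_integralClosure (A K L k : Type*) [CommRing A] [IsDomain A]
    [IsPrincipalIdealRing A] [Field K] [Algebra A K] [IsFractionRing A K] [Field L]
    [Algebra K L] [Algebra A L] [IsScalarTower A K L] [FiniteDimensional K L]
    [Algebra.IsSeparable K L] [Field k] [Algebra A k] :
    Module.finrank k (k ⊗[A] integralClosure A L) = Module.finrank K L := by
  have : Module.IsTorsionFree A L := .trans (R := K)
  have := IsIntegralClosure.module_free A K L (integralClosure A L)
  exact Module.finrank_baseChange.trans (IsIntegralClosure.rank A K L _)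

theorem map_baseChange_eq_prod_X_sub_C {A k B : Type*} [CommRing A] [CommRing k] [Algebra A k]
    [CommRing B] [Algebra A B] {p : A[X]} {ι : Type*} [Fintype ι] {f : ι → B}
    (h : p.map (algebraMap A B) = ∏ i, (X - C (f i))) :
    p.map (algebraMap A (k ⊗[A] B)) = ∏ i, (X - C (1 ⊗ₜ f i)) := by
  rw [← Algebra.TensorProduct.includeRight.comp_algebraMap, ← Polynomial.map_map, h,
    Polynomial.map_prod]
  simp

def AlgEquiv.baseChangeHom (A k B : Type*) [CommRing A] [CommRing k] [Algebra A k] [CommRing B]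
    [Algebra A B] : (B ≃ₐ[A] B) →* (k ⊗[A] B ≃ₐ[k] k ⊗[A] B) where
  toFun e := Algebra.TensorProduct.congr .refl e
  map_one' := Algebra.TensorProduct.congr_refl
  map_mul' e f := Algebra.TensorProduct.congr_trans .refl .refl f e

theorem AdjoinRoot.bijective_liftAlgHom_of_finrank_eq {K V : Type*} [Field K] [CommRing V]
    [Nontrivial V] [Algebra K V] {p : K[X]} [Fact (Irreducible p)] {z : V}
    (hz : aeval z p = 0) (h : Module.finrank K V = p.natDegree) :
    Function.Bijective (liftAlgHom p (Algebra.ofId K V) z hz) := by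
  have hinj := (liftAlgHom p (Algebra.ofId K V) z hz).toRingHom.injective
  have hp : Module.finrank K (AdjoinRoot p) = p.natDegree := by
    rw [(powerBasis (Fact.out : Irreducible p).ne_zero).finrank, powerBasis_dim]
  have : Module.Finite K (AdjoinRoot p) := (powerBasis (Fact.out : Irreducible p).ne_zero).finite
  have : Module.Finite K V := Module.finite_of_finrank_pos
    (h ▸ natDegree_pos_iff_degree_pos.mpr (degree_pos_of_irreducible Fact.out))
  exact ⟨hinj, (LinearMap.injective_iff_surjective_of_finrank_eq_finrank
    (f := (liftAlgHom p (Algebra.ofId K V) z hz).toLinearMap) (hp.trans h.symm)).mp hinj⟩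

theorem IsGalois.of_injective_of_finrank_le_card {F E G : Type*} [Field F] [Field E]
    [Algebra F E] [FiniteDimensional F E] [Group G] (φ : G →* Gal(E/F))
    (hφ : Function.Injective φ) (h : Module.finrank F E ≤ Nat.card G) :
    IsGalois F E ∧ Function.Bijective φ := by
  have hG := Nat.card_le_card_of_injective φ hφ
  have hE : Nat.card Gal(E/F) ≤ Module.finrank F E :=
    (Nat.card_le_card_of_injective _ AlgEquiv.coe_toAlgHom_injective).trans
      (card_algHom_le_finrank F E E)
  exact ⟨IsGalois.of_card_aut_eq_finrank F E (by omega),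
    (Nat.bijective_iff_injective_and_card φ).mpr ⟨hφ, by omega⟩⟩

theorem isGalois_adjoin_root_of_map_eq_prod {K V G L : Type*} [Field K] [CommRing V]
    [Algebra K V] [Group G] [Fintype G] [Field L] [Algebra K L] {p : K[X]}
    (hirr : Irreducible p) (hsep : p.Separable) (hmonic : p.Monic) (Ψ : G →* (V ≃ₐ[K] V))
    {z : V} (hfactor : p.map (algebraMap K V) = ∏ σ, (X - C (Ψ σ z)))
    (hrank : Module.finrank K V = Nat.card G) {y : L} (hy : aeval y p = 0) :
    IsGalois K K⟮y⟯ ∧ Module.finrank K K⟮y⟯ = Nat.card G ∧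
      Nonempty (Gal(K⟮y⟯/K) ≃* G) := by
  have : Nontrivial V := Module.nontrivial_of_finrank_pos (R := K) (hrank ▸ Nat.card_pos)
  have hdeg : p.natDegree = Nat.card G := by
    rw [← hmonic.natDegree_map (algebraMap K V), hfactor,
      natDegree_prod_of_monic _ _ fun σ _ ↦ monic_X_sub_C _]
    simp
  have hz : aeval z p = 0 := by
    rw [aeval_def, ← eval_map, hfactor, eval_prod]
    exact Finset.prod_eq_zero (Finset.mem_univ 1) (by simp)
  have hΨ : Function.Injective Ψ := fun σ τ h ↦
    (hfactor ▸ hsep.map).injective_of_prod_X_sub_C (by simp only [h])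
  have : Fact (Irreducible p) := ⟨hirr⟩
  have hyint : IsIntegral K y := (show IsAlgebraic K y from ⟨p, hirr.ne_zero, hy⟩).isIntegral
  have := adjoin.finiteDimensional hyint
  have hymin := minpoly.eq_of_irreducible_of_monic hirr hy hmonic
  let ε : K⟮y⟯ ≃ₐ[K] V :=
    (adjoinRootEquivAdjoin K hyint).symm.trans <|
      (AdjoinRoot.algEquivOfEq K _ _ hymin.symm).trans <|
        .ofBijective _ (AdjoinRoot.bijective_liftAlgHom_of_finrank_eq hz (hrank.trans hdeg.symm))
  have hε := ε.toLinearEquiv.finrank_eq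
  obtain ⟨hgal, hbij⟩ := IsGalois.of_injective_of_finrank_le_card
    ((AlgEquiv.autCongr ε).symm.toMonoidHom.comp Ψ)
    ((AlgEquiv.autCongr ε).symm.injective.comp hΨ) (by rw [hε, hrank])
  exact ⟨hgal, hε.trans hrank, ⟨(MulEquiv.ofBijective _ hbij).symm⟩⟩

open IntermediateField Polynomial in
theorem specialization_galois_general (K : Type*) [Field K]
    (F₀ : Type*) [Field F₀] [Algebra (RatFunc K) F₀]
    [IsGalois (RatFunc K) F₀] [FiniteDimensional (RatFunc K) F₀]
    [Algebra (Polynomial K) F₀] [IsScalarTower (Polynomial K) (RatFunc K) F₀]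
    (x : F₀) (hxint : IsIntegral (Polynomial K) x)
    (hF₀ : adjoin (RatFunc K) {x} = ⊤)
    (g : Polynomial (Polynomial K)) (hg : g.Monic)
    (hirr : g.map (algebraMap (Polynomial K) (RatFunc K)) = minpoly (RatFunc K) x)
    (b : K)
    (hdisc : (g.map (evalRingHom b)).Separable)
    (hirrb : Irreducible (g.map (evalRingHom b))) :
    ∀ (L : Type*) [Field L] [Algebra K L] (y : L), aeval y (g.map (evalRingHom b)) = 0 →
      IsGalois K (adjoin K {y}) ∧
      Module.finrank K (adjoin K {y}) = Module.finrank (RatFunc K) F₀ ∧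
      Nonempty ((adjoin K {y} ≃ₐ[K] adjoin K {y}) ≃* (F₀ ≃ₐ[RatFunc K] F₀)) := by
  intro L _ _ y hy
  let : Algebra K[X] K := (evalRingHom b).toAlgebra
  let B := integralClosure K[X] F₀
  let Ψ := (AlgEquiv.baseChangeHom K[X] K B).comp (galRestrict K[X] (RatFunc K) F₀ B).toMonoidHom
  have hfactor : (g.map (evalRingHom b)).map (algebraMap K (K ⊗[K[X]] B)) =
      ∏ σ, (X - C (Ψ σ (1 ⊗ₜ ⟨x, hxint⟩))) := by
    have hspec : (algebraMap K (K ⊗[K[X]] B)).comp (evalRingHom b) = algebraMap K[X] _ :=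
      (IsScalarTower.algebraMap_eq K[X] K _).symm
    rw [Polynomial.map_map, hspec]
    exact map_baseChange_eq_prod_X_sub_C (map_eq_prod_X_sub_C_galRestrict hF₀ hirr)
  have hrank : Module.finrank K (K ⊗[K[X]] B) = Nat.card Gal(F₀/RatFunc K) := by
    rw [finrank_baseChange_integralClosure K[X] (RatFunc K), IsGalois.card_aut_eq_finrank]
  obtain ⟨hgal, hdeg, hgroup⟩ :=
    isGalois_adjoin_root_of_map_eq_prod hirrb hdisc (hg.map _) Ψ hfactor hrank hy
  exact ⟨hgal, hdeg.trans (IsGalois.card_aut_eq_finrank _ _), hgroup⟩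

open IntermediateField Polynomial in
/-- Specialization step: let `F₀/K(t)` be finite Galois with `F₀` regular over `K`
(`K` algebraically closed in `F₀` and `F₀/K` separable), `x` integral over `K[t]` with
`F₀ = K(t,x)`, and `g ∈ K[T,X]` monic in `X` with `g(t,X) = irr(x,K(t))`. If `b ∈ K` is
such that `g(b,X)` has nonzero discriminant (i.e. is separable) and is irreducible over
`K`, then adjoining to `K` a root of `g(b,X)` produces a Galois extension of `K` of degree
`[F₀ : K(t)]` with Galois group isomorphic to `Gal(F₀/K(t))`. -/
theorem specialization_galois (K : Type*) [Field K]
    (F₀ : Type*) [Field F₀] [Algebra (RatFunc K) F₀]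
    [IsGalois (RatFunc K) F₀] [FiniteDimensional (RatFunc K) F₀]
    [Algebra K F₀] [IsScalarTower K (RatFunc K) F₀]
    [Algebra (Polynomial K) F₀] [IsScalarTower (Polynomial K) (RatFunc K) F₀]
    -- `F₀` is regular over `K`: `K` is algebraically closed in `F₀` ...
    (hreg : ∀ y : F₀, IsAlgebraic K y → y ∈ (algebraMap K F₀).range)
    -- ... and `F₀/K` is separable (every element of `F₀` algebraic over `K` is separable)
    (hsep : ∀ y : F₀, IsAlgebraic K y → IsSeparable K y)
    (x : F₀) (hxint : IsIntegral (Polynomial K) x)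
    (hF₀ : adjoin (RatFunc K) {x} = ⊤)
    (g : Polynomial (Polynomial K)) (hg : g.Monic)
    (hirr : g.map (algebraMap (Polynomial K) (RatFunc K)) = minpoly (RatFunc K) x)
    (b : K)
    (hdisc : (g.map (evalRingHom b)).Separable)
    (hirrb : Irreducible (g.map (evalRingHom b))) :
    ∀ (L : Type*) [Field L] [Algebra K L] (y : L), aeval y (g.map (evalRingHom b)) = 0 →
      IsGalois K (adjoin K {y}) ∧
      Module.finrank K (adjoin K {y}) = Module.finrank (RatFunc K) F₀ ∧
      Nonempty ((adjoin K {y} ≃ₐ[K] adjoin K {y}) ≃* (F₀ ≃ₐ[RatFunc K] F₀)) :=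
  specialization_galois_general K F₀ x hxint hF₀ g hg hirr b hdisc hirrb
end
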